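/- arXiv:2605.13090 — 2 statements merged into one kernel-verified Lean document; each statement's English description precedes it below -/
import Mathlib

section
/- Let n ≥ 3, k ≥ 1 and let ζ_3 : M_kVT_n → GL_n(ℂ) be the representation sending s_i to the identity-except-block matrix with block diag(1, −1) at rows/columns i, i+1, and ρ_i^α to the identity-except-block matrix with block [[0, 1/y_α],[y_α, 0]]. Then for all 1 ≤ i ≤ n−2, the element s_i s_{i+1} s_i s_{i+1} lies in the kernel of ζ_3 but is a nontrivial element of M_kVT_n; hence ζ_3 is not injective. -/
/-- Generators of the multi-virtual twin group `M_{k+1}VT_{m+2}`: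
`s i` for `i = 0, …, m` and `ρ i α` for `i = 0, …, m`, `α = 0, …, k`. -/
inductive MVTGen (m k : ℕ) : Type
  | s : Fin (m + 1) → MVTGen m k
  | rho : Fin (m + 1) → Fin (k + 1) → MVTGen m k

open FreeGroup in
/-- The defining relators of the multi-virtual twin group `M_{k+1}VT_{m+2}`. -/
def mvtRels (m k : ℕ) : Set (FreeGroup (MVTGen m k)) :=
  { r | (∃ i : Fin (m + 1), r = of (MVTGen.s i) * of (MVTGen.s i))
    ∨ (∃ i j : Fin (m + 1), (i.1 + 2 ≤ j.1 ∨ j.1 + 2 ≤ i.1) ∧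
        r = of (MVTGen.s i) * of (MVTGen.s j) * (of (MVTGen.s i))⁻¹ * (of (MVTGen.s j))⁻¹)
    ∨ (∃ (i : Fin (m + 1)) (α : Fin (k + 1)),
        r = of (MVTGen.rho i α) * of (MVTGen.rho i α))
    ∨ (∃ (i j : Fin (m + 1)) (α β : Fin (k + 1)), (i.1 + 2 ≤ j.1 ∨ j.1 + 2 ≤ i.1) ∧
        r = of (MVTGen.rho i α) * of (MVTGen.rho j β) *
            (of (MVTGen.rho i α))⁻¹ * (of (MVTGen.rho j β))⁻¹)
    ∨ (∃ (i j : Fin (m + 1)) (α : Fin (k + 1)), (i.1 + 2 ≤ j.1 ∨ j.1 + 2 ≤ i.1) ∧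
        r = of (MVTGen.rho i α) * of (MVTGen.s j) *
            (of (MVTGen.rho i α))⁻¹ * (of (MVTGen.s j))⁻¹)
    ∨ (∃ (i j : Fin (m + 1)) (α : Fin (k + 1)), j.1 = i.1 + 1 ∧
        r = of (MVTGen.rho i α) * of (MVTGen.rho j α) * of (MVTGen.rho i α) *
            (of (MVTGen.rho j α) * of (MVTGen.rho i α) * of (MVTGen.rho j α))⁻¹)
    ∨ (∃ (i j : Fin (m + 1)) (α β : Fin (k + 1)), j.1 = i.1 + 1 ∧ α.1 < β.1 ∧
        r = of (MVTGen.rho i α) * of (MVTGen.rho j β) * of (MVTGen.rho i β) *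
            (of (MVTGen.rho j β) * of (MVTGen.rho i β) * of (MVTGen.rho j α))⁻¹)
    ∨ (∃ (i j : Fin (m + 1)) (α β : Fin (k + 1)), j.1 = i.1 + 1 ∧ α.1 < β.1 ∧
        r = of (MVTGen.rho i α) * of (MVTGen.rho j α) * of (MVTGen.rho i β) *
            (of (MVTGen.rho j β) * of (MVTGen.rho i α) * of (MVTGen.rho j α))⁻¹)
    ∨ (∃ (i j : Fin (m + 1)) (α : Fin (k + 1)), j.1 = i.1 + 1 ∧
        r = of (MVTGen.rho i α) * of (MVTGen.rho j α) * of (MVTGen.s i) *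
            (of (MVTGen.s j) * of (MVTGen.rho i α) * of (MVTGen.rho j α))⁻¹) }

/-- The multi-virtual twin group `M_{k+1}VT_{m+2}`. -/
def MVT (m k : ℕ) : Type := PresentedGroup (mvtRels m k)

instance (m k : ℕ) : Group (MVT m k) := by unfold MVT; infer_instance

/-- The image in `M_{k+1}VT_{m+2}` of a generator. -/
def MVT.gen {m k : ℕ} (g : MVTGen m k) : MVT m k := PresentedGroup.of g

/-- The `n × n` matrix equal to the identity except for the `2 × 2` block
`[[a, b], [c, d]]` in rows and columns `i, i+1`. -/
def locMat (n : ℕ) (i : ℕ) (a b c d : ℂ) : Matrix (Fin n) (Fin n) ℂ :=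
  Matrix.of fun p q =>
    if p.1 = i ∧ q.1 = i then a
    else if p.1 = i ∧ q.1 = i + 1 then b
    else if p.1 = i + 1 ∧ q.1 = i then c
    else if p.1 = i + 1 ∧ q.1 = i + 1 then d
    else if p = q then 1 else 0

/-!
Both `ζ(sᵢ)` and `ζ(sᵢ₊₁)` are diagonal with entries `±1`, so they commute and square to the
identity; hence `ζ` kills the word `sᵢ sᵢ₊₁ sᵢ sᵢ₊₁`. That word survives in the quotient of
`M_kVT_n` onto the symmetric group sending `sᵢ` and every `ρᵢ^α` to the transposition `(i i+1)`,
where it becomes the square of a 3-cycle.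
-/

open Equiv

theorem Commute.mul_mul_mul_eq_one {G : Type*} [Monoid G] {a b : G} (h : Commute a b)
    (ha : a * a = 1) (hb : b * b = 1) : a * b * a * b = 1 := by
  rw [mul_assoc a b a, ← h.eq, ← mul_assoc a a b, ha, one_mul, hb]

section AdjSwap

def adjSwap {m : ℕ} (i : Fin (m + 1)) : Perm (Fin (m + 2)) := swap i.castSucc i.succ

variable {m : ℕ} {i j : Fin (m + 1)}

theorem adjSwap_mul_self (i : Fin (m + 1)) : adjSwap i * adjSwap i = 1 :=
  swap_mul_self _ _

theorem adjSwap_commute (h : i.1 + 2 ≤ j.1 ∨ j.1 + 2 ≤ i.1) : Commute (adjSwap i) (adjSwap j) :=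
  (Perm.disjoint_swap_swap (by simp [Fin.ext_iff]; omega)).commute

theorem adjSwap_braid (h : j.1 = i.1 + 1) :
    adjSwap i * adjSwap j * adjSwap i = adjSwap j * adjSwap i * adjSwap j := by
  have hij : j.castSucc = i.succ := Fin.ext (by simp [h])
  have hab : i.castSucc ≠ i.succ := Fin.castSucc_lt_succ.ne
  have hac : i.castSucc ≠ j.succ := by simp [Fin.ext_iff]; omega
  have hbc : i.succ ≠ j.succ := by simp [Fin.ext_iff]; omega
  have lhs : swap i.castSucc i.succ * swap i.succ j.succ * swap i.castSucc i.succ =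
      swap i.castSucc j.succ := by
    rw [swap_comm i.castSucc, swap_comm i.succ j.succ, swap_mul_swap_mul_swap hbc.symm hac.symm]
  rw [adjSwap, adjSwap, hij, lhs, swap_mul_swap_mul_swap hab hac, swap_comm]

theorem adjSwap_mul_adjSwap_mul_adjSwap_mul_adjSwap_ne_one (h : j.1 = i.1 + 1) :
    adjSwap i * adjSwap j * adjSwap i * adjSwap j ≠ 1 := by
  have hij : j.castSucc = i.succ := Fin.ext (by simp [h])
  have hac : i.castSucc ≠ j.succ := by simp [Fin.ext_iff]; omega
  have h1 : adjSwap j i.castSucc = i.castSucc :=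
    swap_apply_of_ne_of_ne (by simp [Fin.ext_iff]; omega) hac
  have h2 : adjSwap i i.castSucc = i.succ := swap_apply_left _ _
  have h3 : adjSwap j i.succ = j.succ := by rw [adjSwap, ← hij, swap_apply_left]
  have h4 : adjSwap i j.succ = j.succ :=
    swap_apply_of_ne_of_ne hac.symm (by simp [Fin.ext_iff]; omega)
  intro hone
  have := congrArg (· i.castSucc) hone
  simp only [Perm.mul_apply, h1, h2, h3, h4, Perm.one_apply] at this
  exact hac this.symm

end AdjSwap

def MVTGen.index {m k : ℕ} : MVTGen m k → Fin (m + 1)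
  | .s i => i
  | .rho i _ => i

namespace MVT

variable {m k : ℕ}

theorem gen_s_mul_self (i : Fin (m + 1)) :
    (gen (.s i) : MVT m k) * gen (.s i) = 1 :=
  PresentedGroup.one_of_mem (Or.inl ⟨i, rfl⟩)

theorem adjSwap_index_satisfies_rels :
    ∀ r ∈ mvtRels m k, FreeGroup.lift (adjSwap ∘ MVTGen.index) r = 1 := by
  rintro r (⟨i, rfl⟩ | ⟨i, j, hfar, rfl⟩ | ⟨i, α, rfl⟩ | ⟨i, j, α, β, hfar, rfl⟩ |
    ⟨i, j, α, hfar, rfl⟩ | ⟨i, j, α, hadj, rfl⟩ | ⟨i, j, α, β, hadj, -, rfl⟩ |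
    ⟨i, j, α, β, hadj, -, rfl⟩ | ⟨i, j, α, hadj, rfl⟩) <;>
    simp only [map_mul, map_inv, FreeGroup.lift_apply_of, Function.comp_apply, MVTGen.index,
      mul_inv_eq_one]
  · exact adjSwap_mul_self i
  · exact (adjSwap_commute hfar).mul_inv_cancel
  · exact adjSwap_mul_self i
  · exact (adjSwap_commute hfar).mul_inv_cancel
  · exact (adjSwap_commute hfar).mul_inv_cancel
  all_goals exact adjSwap_braid hadj

def toPerm : MVT m k →* Perm (Fin (m + 2)) :=
  PresentedGroup.toGroup adjSwap_index_satisfies_rels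

theorem toPerm_gen (g : MVTGen m k) : toPerm (gen g) = adjSwap g.index :=
  PresentedGroup.toGroup.of _

theorem gen_s_mul_gen_s_mul_gen_s_mul_gen_s_ne_one {i j : Fin (m + 1)} (h : j.1 = i.1 + 1) :
    (gen (.s i) : MVT m k) * gen (.s j) * gen (.s i) * gen (.s j) ≠ 1 := fun hone =>
  adjSwap_mul_adjSwap_mul_adjSwap_mul_adjSwap_ne_one h <| by
    simpa only [map_mul, map_one, toPerm_gen, MVTGen.index] using congrArg toPerm hone

end MVT

theorem locMat_one_zero_zero_neg_one (n i : ℕ) :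
    locMat n i 1 0 0 (-1) = Matrix.diagonal fun p : Fin n => if p.1 = i + 1 then -1 else 1 := by
  ext p q
  rcases eq_or_ne p q with rfl | hpq
  · simp only [locMat, Matrix.of_apply, Matrix.diagonal_apply_eq]
    split_ifs <;> first | rfl | omega
  · have hpq' : p.1 ≠ q.1 := Fin.val_ne_of_ne hpq
    simp only [locMat, Matrix.of_apply, Matrix.diagonal_apply_ne _ hpq]
    split_ifs <;> first | rfl | omega

theorem commute_locMat_one_zero_zero_neg_one (n i j : ℕ) :
    Commute (locMat n i 1 0 0 (-1)) (locMat n j 1 0 0 (-1)) := by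
  rw [locMat_one_zero_zero_neg_one, locMat_one_zero_zero_neg_one]
  exact Matrix.commute_diagonal _ _

theorem mvt_zeta3_unfaithful_general (m k : ℕ)
    (ζ : MVT (m + 1) k →* GL (Fin (m + 3)) ℂ)
    (hs : ∀ i : Fin (m + 2),
      ((ζ (MVT.gen (MVTGen.s i)) : GL (Fin (m + 3)) ℂ) :
        Matrix (Fin (m + 3)) (Fin (m + 3)) ℂ) = locMat (m + 3) i.1 1 0 0 (-1)) :
    (∀ i j : Fin (m + 2), j.1 = i.1 + 1 →
      ζ ((MVT.gen (MVTGen.s i) : MVT (m + 1) k) * MVT.gen (MVTGen.s j) *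
          MVT.gen (MVTGen.s i) * MVT.gen (MVTGen.s j)) = 1 ∧
      (MVT.gen (MVTGen.s i) : MVT (m + 1) k) * MVT.gen (MVTGen.s j) *
          MVT.gen (MVTGen.s i) * MVT.gen (MVTGen.s j) ≠ 1) ∧
    ¬ Function.Injective ζ := by
  have hsq : ∀ i : Fin (m + 2), ζ (MVT.gen (.s i)) * ζ (MVT.gen (.s i)) = 1 := fun i => by
    rw [← map_mul, MVT.gen_s_mul_self, map_one]
  have hcomm : ∀ i j : Fin (m + 2), Commute (ζ (MVT.gen (.s i))) (ζ (MVT.gen (.s j))) :=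
    fun i j => Commute.units_val_iff.mp <| by
      rw [hs, hs]; exact commute_locMat_one_zero_zero_neg_one _ _ _
  have hker : ∀ i j : Fin (m + 2), ζ ((MVT.gen (.s i) : MVT (m + 1) k) * MVT.gen (.s j) *
      MVT.gen (.s i) * MVT.gen (.s j)) = 1 := fun i j => by
    simp only [map_mul]
    exact (hcomm i j).mul_mul_mul_eq_one (hsq i) (hsq j)
  refine ⟨fun i j h => ⟨hker i j, MVT.gen_s_mul_gen_s_mul_gen_s_mul_gen_s_ne_one h⟩,
    fun hinj => ?_⟩
  exact MVT.gen_s_mul_gen_s_mul_gen_s_mul_gen_s_ne_one (i := 0) (j := 1) rfl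
    (hinj ((hker 0 1).trans (map_one ζ).symm))

/-- For the 2-local representation `ζ₃` of `M_{k+1}VT_{m+3}` (with `sᵢ ↦` identity except
block `diag(1, -1)` and `ρᵢ^α ↦` identity except block `[[0, 1/y_α],[y_α, 0]]`), every
element `sᵢ s_{i+1} sᵢ s_{i+1}` lies in the kernel of `ζ₃` but is nontrivial in
`M_{k+1}VT_{m+3}`; hence `ζ₃` is not injective. -/
theorem mvt_zeta3_unfaithful (m k : ℕ) (y : Fin (k + 1) → ℂ) (hy : ∀ α, y α ≠ 0)
    (ζ : MVT (m + 1) k →* GL (Fin (m + 3)) ℂ)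
    (hs : ∀ i : Fin (m + 2),
      ((ζ (MVT.gen (MVTGen.s i)) : GL (Fin (m + 3)) ℂ) :
        Matrix (Fin (m + 3)) (Fin (m + 3)) ℂ) = locMat (m + 3) i.1 1 0 0 (-1))
    (hr : ∀ (i : Fin (m + 2)) (α : Fin (k + 1)),
      ((ζ (MVT.gen (MVTGen.rho i α)) : GL (Fin (m + 3)) ℂ) :
        Matrix (Fin (m + 3)) (Fin (m + 3)) ℂ) = locMat (m + 3) i.1 0 (y α)⁻¹ (y α) 0) :
    (∀ i j : Fin (m + 2), j.1 = i.1 + 1 →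
      ζ ((MVT.gen (MVTGen.s i) : MVT (m + 1) k) * MVT.gen (MVTGen.s j) *
          MVT.gen (MVTGen.s i) * MVT.gen (MVTGen.s j)) = 1 ∧
      (MVT.gen (MVTGen.s i) : MVT (m + 1) k) * MVT.gen (MVTGen.s j) *
          MVT.gen (MVTGen.s i) * MVT.gen (MVTGen.s j) ≠ 1) ∧
    ¬ Function.Injective ζ :=
  mvt_zeta3_unfaithful_general m k ζ hs
end

section
/- Let y ∈ ℂ*. Consider the six 3×3 matrices L12 = [[0, 1/y, 0],[y, 0, 0],[0,0,1]], L23 = [[1,0,0],[0,0,1/y],[0,y,0]], L13 = [[0,0,1/y²],[0,1,0],[y²,0,0]], and M12 = M23 = M13 = I_3 (the case y_0 = y_1 = y). Then the one-dimensional subspace of ℂ³ spanned by (1, y, y²)ᵀ is invariant under all six matrices, so the corresponding representation of M_2VPT_3 is reducible. -/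
/-! Each of the matrices fixes the vector `(1, y, y²)`, and a line spanned by a common
eigenvector is invariant; a line is a proper nonzero subspace of `ℂ³`. -/

open Matrix Module

theorem Matrix.mulVec_mem_span_singleton_of_mulVec_eq_smul {n R : Type*} [Fintype n]
    [CommRing R] {A : Matrix n n R} {v : n → R} {c : R} (hA : A *ᵥ v = c • v)
    {u : n → R} (hu : u ∈ Submodule.span R {v}) : A *ᵥ u ∈ Submodule.span R {v} := by
  obtain ⟨a, rfl⟩ := Submodule.mem_span_singleton.mp hu
  rw [mulVec_smul, hA, smul_smul]
  exact Submodule.smul_mem _ _ (Submodule.mem_span_singleton_self v)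

theorem Matrix.mulVec_mem_span_singleton_of_mulVec_eq {n R : Type*} [Fintype n]
    [CommRing R] {A : Matrix n n R} {v : n → R} (hA : A *ᵥ v = v)
    {u : n → R} (hu : u ∈ Submodule.span R {v}) : A *ᵥ u ∈ Submodule.span R {v} :=
  mulVec_mem_span_singleton_of_mulVec_eq_smul (c := 1) (by rw [one_smul, hA]) hu

theorem Submodule.span_singleton_ne_top_of_one_lt_finrank {K V : Type*} [DivisionRing K]
    [AddCommGroup V] [Module K V] (v : V) (h : 1 < finrank K V) :
    Submodule.span K {v} ≠ ⊤ :=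
  (span_lt_top_of_card_lt_finrank (s := {v}) (by simpa using h)).ne

theorem mulVec_swap12_geometric {y : ℂ} (hy : y ≠ 0) :
    !![0, y⁻¹, 0; y, 0, 0; 0, 0, 1] *ᵥ ![1, y, y ^ 2] = ![1, y, y ^ 2] := by
  ext i; fin_cases i <;> simp [mul_inv_cancel₀ hy]

theorem mulVec_swap23_geometric {y : ℂ} (hy : y ≠ 0) :
    !![1, 0, 0; 0, 0, y⁻¹; 0, y, 0] *ᵥ ![1, y, y ^ 2] = ![1, y, y ^ 2] := by
  ext i; fin_cases i <;> simp <;> field_simp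

theorem mulVec_swap13_geometric {y : ℂ} (hy : y ≠ 0) :
    !![0, 0, (y ^ 2)⁻¹; 0, 1, 0; y ^ 2, 0, 0] *ᵥ ![1, y, y ^ 2] = ![1, y, y ^ 2] := by
  ext i; fin_cases i <;> simp [mul_inv_cancel₀ (pow_ne_zero 2 hy)]

/-- In the case `y₀ = y₁ = y`, the line spanned by `(1, y, y²)ᵀ` is invariant under all
six matrices representing the generators of `M₂VPT₃` (the three diagonal ones being the
identity), so the corresponding representation of `M₂VPT₃` is reducible. -/
theorem m2vpt3_zeta2_equal_reducible (y : ℂ) (hy : y ≠ 0) :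
    (∀ u ∈ Submodule.span ℂ {![(1 : ℂ), y, y ^ 2]},
      (!![0, y⁻¹, 0; y, 0, 0; 0, 0, 1]).mulVec u ∈
        Submodule.span ℂ {![(1 : ℂ), y, y ^ 2]}) ∧
    (∀ u ∈ Submodule.span ℂ {![(1 : ℂ), y, y ^ 2]},
      (!![1, 0, 0; 0, 0, y⁻¹; 0, y, 0]).mulVec u ∈
        Submodule.span ℂ {![(1 : ℂ), y, y ^ 2]}) ∧
    (∀ u ∈ Submodule.span ℂ {![(1 : ℂ), y, y ^ 2]},
      (!![0, 0, (y ^ 2)⁻¹; 0, 1, 0; y ^ 2, 0, 0]).mulVec u ∈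
        Submodule.span ℂ {![(1 : ℂ), y, y ^ 2]}) ∧
    (∀ u ∈ Submodule.span ℂ {![(1 : ℂ), y, y ^ 2]},
      (1 : Matrix (Fin 3) (Fin 3) ℂ).mulVec u ∈
        Submodule.span ℂ {![(1 : ℂ), y, y ^ 2]}) ∧
    Submodule.span ℂ {![(1 : ℂ), y, y ^ 2]} ≠ ⊥ ∧
    Submodule.span ℂ {![(1 : ℂ), y, y ^ 2]} ≠ ⊤ := by
  refine ⟨fun u => mulVec_mem_span_singleton_of_mulVec_eq (mulVec_swap12_geometric hy),
    fun u => mulVec_mem_span_singleton_of_mulVec_eq (mulVec_swap23_geometric hy),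
    fun u => mulVec_mem_span_singleton_of_mulVec_eq (mulVec_swap13_geometric hy),
    fun u => mulVec_mem_span_singleton_of_mulVec_eq (one_mulVec _), ?_,
    Submodule.span_singleton_ne_top_of_one_lt_finrank _ (by simp)⟩
  rw [Ne, Submodule.span_singleton_eq_bot]
  intro h
  simpa using congrFun h 0
end
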